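/- arXiv:1107.1692 — 4 statements merged into one kernel-verified Lean document; each statement's English description precedes it below -/
import Mathlib

section
/- Assume the Continuum Hypothesis. Every nonempty clopen (simultaneously closed and open) subset of the Stone–Čech remainder ω* = βℕ \ ℕ, regarded as a topological subspace, is homeomorphic to ω*. -/
open Filter Topology
open scoped ENNReal

set_option synthInstance.maxHeartbeats 400000
set_option maxHeartbeats 1000000

noncomputable section

universe u

/-- The Stone–Čech remainder `ω* = βℕ \\ ℕ`, where `ℕ` carries the discrete topology
and is identified with its image in `βℕ` under the canonical map. -/
abbrev OmegaStar : Type :=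
  {p : StoneCech ℕ // p ∉ Set.range (stoneCechUnit : ℕ → StoneCech ℕ)}

namespace OmegaStarAux

/-- `Ultrafilter.map` is continuous. -/
lemma continuous_ultrafilter_map (f : ℕ → ℕ) : Continuous (Ultrafilter.map f) := by
  rw [show (Ultrafilter.topologicalSpace : TopologicalSpace (Ultrafilter ℕ)) =
      TopologicalSpace.generateFrom (ultrafilterBasis ℕ) from rfl, continuous_generateFrom_iff]
  rintro _ ⟨s, rfl⟩
  have : (Ultrafilter.map f) ⁻¹' {u | s ∈ u} = {u : Ultrafilter ℕ | f ⁻¹' s ∈ u} := by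
    ext u; exact Ultrafilter.mem_map
  rw [this]
  exact ultrafilter_isOpen_basic _

lemma continuous_pure_nat : Continuous (pure : ℕ → Ultrafilter ℕ) :=
  continuous_of_discreteTopology

/-- The Stone–Čech compactification of `ℕ` is the space of ultrafilters. -/
def scHomeo : StoneCech ℕ ≃ₜ Ultrafilter ℕ := by
  refine Continuous.homeoOfEquivCompactToT2
    (f := ⟨stoneCechExtend continuous_pure_nat, Ultrafilter.extend stoneCechUnit, ?_, ?_⟩)
    (continuous_stoneCechExtend continuous_pure_nat)
  · intro x
    have h1 : Continuous (Ultrafilter.extend stoneCechUnit ∘ stoneCechExtend continuous_pure_nat) :=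
      (continuous_ultrafilter_extend _).comp (continuous_stoneCechExtend _)
    have h2 : (Ultrafilter.extend stoneCechUnit ∘ stoneCechExtend continuous_pure_nat) = id := by
      refine stoneCech_hom_ext h1 continuous_id (funext fun n => ?_)
      simp only [Function.comp_apply, id_eq]
      have e1 : stoneCechExtend continuous_pure_nat (stoneCechUnit n) = pure n :=
        congrFun (stoneCechExtend_extends continuous_pure_nat) n
      rw [e1]
      exact congrFun (ultrafilter_extend_extends (stoneCechUnit : ℕ → StoneCech ℕ)) n
    exact congrFun h2 x
  · intro u
    have h1 : Continuous (stoneCechExtend continuous_pure_nat ∘ Ultrafilter.extend stoneCechUnit) :=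
      (continuous_stoneCechExtend _).comp (continuous_ultrafilter_extend _)
    have h2 : (stoneCechExtend continuous_pure_nat ∘ Ultrafilter.extend stoneCechUnit) = id := by
      refine Continuous.ext_on denseRange_pure h1 continuous_id ?_
      rintro _ ⟨n, rfl⟩
      simp only [Function.comp_apply, id_eq]
      have e1 : Ultrafilter.extend stoneCechUnit (pure n) = stoneCechUnit n :=
        congrFun (ultrafilter_extend_extends (stoneCechUnit : ℕ → StoneCech ℕ)) n
      rw [e1]
      exact congrFun (stoneCechExtend_extends continuous_pure_nat) n
    exact congrFun h2 u

lemma scHomeo_unit (n : ℕ) : scHomeo (stoneCechUnit n) = pure n :=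
  congrFun (stoneCechExtend_extends continuous_pure_nat) n

lemma mem_range_unit_iff (p : StoneCech ℕ) :
    p ∈ Set.range (stoneCechUnit : ℕ → StoneCech ℕ) ↔
      scHomeo p ∈ Set.range (pure : ℕ → Ultrafilter ℕ) := by
  constructor
  · rintro ⟨n, rfl⟩; exact ⟨n, (scHomeo_unit n).symm⟩
  · rintro ⟨n, hn⟩
    refine ⟨n, ?_⟩
    have : scHomeo p = scHomeo (stoneCechUnit n) := by rw [scHomeo_unit]; exact hn.symm
    exact (scHomeo.injective this).symm

lemma isOpen_range_pure : IsOpen (Set.range (pure : ℕ → Ultrafilter ℕ)) := by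
  have : Set.range (pure : ℕ → Ultrafilter ℕ) = ⋃ n : ℕ, {u : Ultrafilter ℕ | {n} ∈ u} := by
    ext u
    simp only [Set.mem_range, Set.mem_iUnion, Set.mem_setOf_eq]
    constructor
    · rintro ⟨n, rfl⟩; exact ⟨n, by simp⟩
    · rintro ⟨n, hn⟩
      obtain ⟨x, hx, hxu⟩ := Ultrafilter.eq_pure_of_finite_mem (Set.finite_singleton n) hn
      exact ⟨x, hxu.symm⟩
  rw [this]
  exact isOpen_iUnion fun n => ultrafilter_isOpen_basic _

lemma isOpen_range_unit : IsOpen (Set.range (stoneCechUnit : ℕ → StoneCech ℕ)) := by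
  have : Set.range (stoneCechUnit : ℕ → StoneCech ℕ)
      = scHomeo ⁻¹' Set.range (pure : ℕ → Ultrafilter ℕ) := by
    ext p; exact mem_range_unit_iff p
  rw [this]
  exact isOpen_range_pure.preimage scHomeo.continuous

lemma free_no_finite {u : Ultrafilter ℕ} (hu : u ∉ Set.range (pure : ℕ → Ultrafilter ℕ))
    {s : Set ℕ} (hs : s.Finite) : s ∉ u := by
  intro hsu
  obtain ⟨x, _, hxu⟩ := Ultrafilter.eq_pure_of_finite_mem hs hsu
  exact hu ⟨x, hxu.symm⟩

end OmegaStarAux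

open OmegaStarAux

/-- Under CH, every nonempty clopen subset of the Stone–Čech remainder `ω*` is
homeomorphic to `ω*` (a consequence of Parovičenko's theorem). -/
theorem clopen_homeomorph_omegaStar
    (hCH : (2 : Cardinal) ^ Cardinal.aleph0 = Cardinal.aleph 1)
    (A : Set OmegaStar) (hA : IsClopen A) (hne : A.Nonempty) :
    Nonempty (A ≃ₜ OmegaStar) := by
  classical
  -- OmegaStar is a compact space
  haveI hcs : CompactSpace OmegaStar :=
    isCompact_iff_compactSpace.mp (isOpen_range_unit.isClosed_compl.isCompact)
  -- the map to ultrafilters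
  set k : OmegaStar → Ultrafilter ℕ := fun x => scHomeo x.1 with hk
  have hkfree : ∀ x : OmegaStar, k x ∉ Set.range (pure : ℕ → Ultrafilter ℕ) := by
    intro x hx
    exact x.2 ((mem_range_unit_iff x.1).mpr hx)
  -- A is the preimage of an open set U
  obtain ⟨V, hV, hVA⟩ := isOpen_induced_iff.mp hA.2
  set U : Set (Ultrafilter ℕ) := scHomeo.symm ⁻¹' V with hU
  have hUopen : IsOpen U := hV.preimage scHomeo.symm.continuous
  have hxAU : ∀ x : OmegaStar, x ∈ A ↔ k x ∈ U := by
    intro x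
    rw [← hVA]
    simp only [hU, Set.mem_preimage, hk, Homeomorph.symm_apply_apply]
  -- C = k '' A is compact and contained in U
  have hAcomp : IsCompact A := hA.1.isCompact
  have hCcomp : IsCompact (k '' A) :=
    hAcomp.image (scHomeo.continuous.comp continuous_subtype_val)
  -- cover by basic sets contained in U
  set ι := {s : Set ℕ // {u : Ultrafilter ℕ | s ∈ u} ⊆ U} with hι
  have hcov : k '' A ⊆ ⋃ i : ι, {u : Ultrafilter ℕ | i.1 ∈ u} := by
    rintro u hu
    have huU : u ∈ U := by
      obtain ⟨x, hx, rfl⟩ := hu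
      exact (hxAU x).mp hx
    obtain ⟨b, ⟨s, rfl⟩, hub, hbU⟩ := ultrafilterBasis_is_basis.exists_subset_of_mem_open huU hUopen
    exact Set.mem_iUnion.mpr ⟨⟨s, hbU⟩, hub⟩
  obtain ⟨t, ht⟩ := hCcomp.elim_finite_subcover (fun i : ι => {u : Ultrafilter ℕ | i.1 ∈ u})
    (fun i => ultrafilter_isOpen_basic _) hcov
  set M : Set ℕ := ⋃ i ∈ t, (i : ι).1 with hM
  -- membership in A is equivalent to M being in the ultrafilter
  have hbasicU : {u : Ultrafilter ℕ | M ∈ u} ⊆ U := by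
    intro u hu
    have : (⋃ i ∈ (t : Set ι), (i : ι).1) ∈ u := by
      simpa [hM] using hu
    rw [Ultrafilter.finite_biUnion_mem_iff t.finite_toSet] at this
    obtain ⟨i, _, hiu⟩ := this
    exact i.2 hiu
  have hkey : ∀ x : OmegaStar, x ∈ A ↔ M ∈ k x := by
    intro x
    constructor
    · intro hx
      have := ht (Set.mem_image_of_mem k hx)
      simp only [Set.mem_iUnion, Set.mem_setOf_eq] at this
      obtain ⟨i, hit, hiu⟩ := this
      exact Filter.mem_of_superset hiu (Set.subset_biUnion_of_mem hit)
    · intro hMx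
      exact (hxAU x).mpr (hbasicU hMx)
  -- M is infinite
  have hMinf : M.Infinite := by
    intro hfin
    obtain ⟨x, hx⟩ := hne
    exact free_no_finite (hkfree x) hfin ((hkey x).mp hx)
  -- a bijection ℕ ≃ M
  haveI := hMinf.to_subtype
  obtain ⟨dM⟩ := nonempty_denumerable ↥M
  set e : ↥M ≃ ℕ := Denumerable.eqv ↥M with he
  set f : ℕ → ℕ := fun n => (e.symm n : ℕ) with hf
  set g : ℕ → ℕ := fun m => if hm : m ∈ M then e ⟨m, hm⟩ else 0 with hg
  have hrange : ∀ n, f n ∈ M := fun n => (e.symm n).2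
  have hgf : ∀ n, g (f n) = n := by
    intro n
    simp only [hg, hf, dif_pos (hrange n)]
    rw [dif_pos (e.symm n).2]
    exact e.apply_symm_apply n
  have hfg : ∀ m ∈ M, f (g m) = m := by
    intro m hm
    simp only [hg, hf, dif_pos hm]
    rw [e.symm_apply_apply]
  have hfinj : Function.Injective f := fun a b hab => by
    rw [← hgf a, hab, hgf b]
  -- the ultrafilter maps
  set Φ : Ultrafilter ℕ → Ultrafilter ℕ := Ultrafilter.map f with hΦ
  set Ψ : Ultrafilter ℕ → Ultrafilter ℕ := Ultrafilter.map g with hΨ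
  have hMΦ : ∀ u, M ∈ Φ u := by
    intro u
    rw [hΦ, Ultrafilter.mem_map]
    exact Filter.mem_of_superset Filter.univ_mem (fun n _ => hrange n)
  have hΨΦ : ∀ u, Ψ (Φ u) = u := by
    intro u
    rw [hΦ, hΨ, Ultrafilter.map_map]
    have : g ∘ f = id := funext hgf
    rw [this, Ultrafilter.map_id]
  have hΦΨ : ∀ u, M ∈ u → Φ (Ψ u) = u := by
    intro u hMu
    rw [hΦ, hΨ, Ultrafilter.map_map]
    refine Ultrafilter.ext fun s => ?_
    rw [Ultrafilter.mem_map]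
    have hinter : (f ∘ g) ⁻¹' s ∩ M = s ∩ M := by
      ext m
      simp only [Set.mem_inter_iff, Set.mem_preimage, Function.comp_apply]
      constructor
      · rintro ⟨hs, hm⟩; rw [hfg m hm] at hs; exact ⟨hs, hm⟩
      · rintro ⟨hs, hm⟩; rw [hfg m hm]; exact ⟨hs, hm⟩
    constructor
    · intro h
      exact Filter.mem_of_superset (by rw [← hinter]; exact Filter.inter_mem h hMu)
        Set.inter_subset_left
    · intro h
      exact Filter.mem_of_superset (by rw [hinter]; exact Filter.inter_mem h hMu)
        Set.inter_subset_left
  -- freeness is preserved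
  have hΦfree : ∀ u : Ultrafilter ℕ, u ∉ Set.range (pure : ℕ → Ultrafilter ℕ) →
      Φ u ∉ Set.range (pure : ℕ → Ultrafilter ℕ) := by
    rintro u hu ⟨n, hn⟩
    have h1 : ({n} : Set ℕ) ∈ Φ u := by rw [← hn]; simp
    rw [hΦ, Ultrafilter.mem_map] at h1
    have hsub : (f ⁻¹' {n}).Subsingleton := fun a ha b hb => hfinj (ha.trans hb.symm)
    exact free_no_finite hu hsub.finite h1
  have hΨfree : ∀ u : Ultrafilter ℕ, u ∉ Set.range (pure : ℕ → Ultrafilter ℕ) → M ∈ u →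
      Ψ u ∉ Set.range (pure : ℕ → Ultrafilter ℕ) := by
    rintro u hu hMu ⟨n, hn⟩
    have h1 : ({n} : Set ℕ) ∈ Ψ u := by rw [← hn]; simp
    rw [hΨ, Ultrafilter.mem_map] at h1
    have h2 : g ⁻¹' {n} ∩ M ∈ u := Filter.inter_mem h1 hMu
    have hsub : (g ⁻¹' {n} ∩ M) ⊆ {f n} := by
      rintro m ⟨hgm, hm⟩
      have : g m = n := hgm
      have := hfg m hm
      rw [hgm] at this
      exact this.symm
    exact free_no_finite hu (Set.finite_singleton (f n)) (Filter.mem_of_superset h2 hsub)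
  -- assemble the equivalence OmegaStar ≃ A
  have hfree_back : ∀ u : Ultrafilter ℕ, u ∉ Set.range (pure : ℕ → Ultrafilter ℕ) →
      scHomeo.symm u ∉ Set.range (stoneCechUnit : ℕ → StoneCech ℕ) := by
    intro u hu h
    rw [mem_range_unit_iff, scHomeo.apply_symm_apply] at h
    exact hu h
  set toF : OmegaStar → ↥A := fun x =>
    ⟨⟨scHomeo.symm (Φ (k x)), hfree_back _ (hΦfree _ (hkfree x))⟩, by
      rw [hkey]
      show M ∈ scHomeo (scHomeo.symm (Φ (k x)))
      rw [scHomeo.apply_symm_apply]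
      exact hMΦ _⟩ with htoF
  set invF : ↥A → OmegaStar := fun a =>
    ⟨scHomeo.symm (Ψ (k a.1)),
      hfree_back _ (hΨfree _ (hkfree a.1) ((hkey a.1).mp a.2))⟩ with hinvF
  have hk_toF : ∀ x : OmegaStar, k (toF x).1 = Φ (k x) := by
    intro x
    show scHomeo (scHomeo.symm (Φ (k x))) = Φ (k x)
    rw [scHomeo.apply_symm_apply]
  have hleft : ∀ x : OmegaStar, invF (toF x) = x := by
    intro x
    refine Subtype.ext ?_
    show scHomeo.symm (Ψ (k (toF x).1)) = x.1
    rw [hk_toF, hΨΦ]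
    exact scHomeo.symm_apply_apply x.1
  have hright : ∀ a : ↥A, toF (invF a) = a := by
    intro a
    refine Subtype.ext (Subtype.ext ?_)
    show scHomeo.symm (Φ (k (invF a))) = (a.1 : OmegaStar).1
    have : k (invF a) = Ψ (k a.1) := by
      show scHomeo (scHomeo.symm (Ψ (k a.1))) = Ψ (k a.1)
      rw [scHomeo.apply_symm_apply]
    rw [this, hΦΨ _ ((hkey a.1).mp a.2)]
    exact scHomeo.symm_apply_apply _
  have hcont : Continuous toF := by
    refine Continuous.subtype_mk (Continuous.subtype_mk ?_ _) _
    exact scHomeo.symm.continuous.comp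
      ((continuous_ultrafilter_map f).comp (scHomeo.continuous.comp continuous_subtype_val))
  exact ⟨(Continuous.homeoOfEquivCompactToT2
    (f := ⟨toF, invF, hleft, hright⟩) hcont).symm⟩

end
end

section
/- Let {A_n} be an infinite sequence of pairwise disjoint nonempty clopen subsets of the Stone–Čech remainder ω* = βℕ \ ℕ, and let A be their union. Then the restriction map from C(closure(A)) to C_b(A), sending a continuous function on the (compact) closure of A in ω* to its restriction to A, is a linear isometric isomorphism of C(closure(A)) onto the space C_b(A) of bounded continuous real-valued functions on A with the supremum norm; equivalently, closure(A) = βA. -/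
open Filter Topology
open scoped ENNReal

set_option synthInstance.maxHeartbeats 400000
set_option maxHeartbeats 1000000

noncomputable section

universe u

set_option linter.unusedVariables false

/-- The inverse map `βℕ → Ultrafilter ℕ`. -/
def scR : StoneCech ℕ → Ultrafilter ℕ :=
  stoneCechExtend (continuous_of_discreteTopology (f := (pure : ℕ → Ultrafilter ℕ)))

lemma scR_unit (k : ℕ) : scR (stoneCechUnit k) = pure k :=
  congrFun (stoneCechExtend_extends (continuous_of_discreteTopology)) k

lemma scR_continuous : Continuous scR := continuous_stoneCechExtend _

/-- The map `Ultrafilter ℕ → βℕ`. -/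
def scQ : Ultrafilter ℕ → StoneCech ℕ := Ultrafilter.extend stoneCechUnit

lemma scQ_pure (k : ℕ) : scQ (pure k) = stoneCechUnit k :=
  congrFun (ultrafilter_extend_extends stoneCechUnit) k

lemma scQ_continuous : Continuous scQ := continuous_ultrafilter_extend _

lemma scQ_scR (x : StoneCech ℕ) : scQ (scR x) = x := by
  refine congrFun (stoneCech_hom_ext (scQ_continuous.comp scR_continuous) continuous_id ?_) x
  funext k
  simp [Function.comp, scR_unit, scQ_pure]

lemma stoneCechUnit_injective : Function.Injective (stoneCechUnit : ℕ → StoneCech ℕ) := by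
  intro a b h
  have : (pure a : Ultrafilter ℕ) = pure b := by rw [← scR_unit, ← scR_unit, h]
  exact Ultrafilter.pure_injective this

/-- basic clopen set of `βℕ` associated to `B ⊆ ℕ`. -/
def clB (B : Set ℕ) : Set (StoneCech ℕ) := closure (stoneCechUnit '' B)

lemma clB_eq (B : Set ℕ) : clB B = scR ⁻¹' {v | B ∈ v} := by
  apply subset_antisymm
  · apply closure_minimal
    · rintro x ⟨k, hk, rfl⟩
      simp [scR_unit, hk]
    · exact (ultrafilter_isClosed_basic B).preimage scR_continuous
  · intro x hx
    have hopen : IsOpen (scR ⁻¹' {v | B ∈ v}) :=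
      (ultrafilter_isOpen_basic B).preimage scR_continuous
    have hdense : Dense (Set.range (stoneCechUnit : ℕ → StoneCech ℕ)) := denseRange_stoneCechUnit
    have := hdense.open_subset_closure_inter hopen hx
    refine closure_mono ?_ this
    rintro y ⟨hy, k, rfl⟩
    have : B ∈ (pure k : Ultrafilter ℕ) := by rwa [← scR_unit]
    exact ⟨k, this, rfl⟩

lemma mem_clB {B : Set ℕ} {x : StoneCech ℕ} : x ∈ clB B ↔ B ∈ scR x := by
  rw [clB_eq]; rfl

lemma isClopen_clB (B : Set ℕ) : IsClopen (clB B) := by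
  rw [clB_eq]
  exact ⟨(ultrafilter_isClosed_basic B).preimage scR_continuous,
    (ultrafilter_isOpen_basic B).preimage scR_continuous⟩

lemma clB_compl (B : Set ℕ) : clB Bᶜ = (clB B)ᶜ := by
  ext x; simp [mem_clB, Ultrafilter.compl_mem_iff_notMem]

lemma clB_inter (B C : Set ℕ) : clB (B ∩ C) = clB B ∩ clB C := by
  ext x
  simp only [mem_clB, Set.mem_inter_iff]
  exact Filter.inter_mem_iff

lemma clB_empty : clB (∅ : Set ℕ) = ∅ := by
  ext x; simp [mem_clB]

lemma clB_singleton (k : ℕ) : clB {k} = {stoneCechUnit k} := by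
  ext x
  simp only [mem_clB, Set.mem_singleton_iff]
  constructor
  · intro h
    obtain ⟨a, ha, hfa⟩ := Ultrafilter.eq_pure_of_finite_mem (Set.finite_singleton k) h
    rcases ha with rfl
    rw [← scQ_scR x, hfa, scQ_pure]
  · rintro rfl
    simp [scR_unit]

lemma clB_mono {B C : Set ℕ} (h : B ⊆ C) : clB B ⊆ clB C := by
  intro x hx; rw [mem_clB] at *; exact Filter.mem_of_superset hx h

lemma isOpen_range_unit : IsOpen (Set.range (stoneCechUnit : ℕ → StoneCech ℕ)) := by
  have : Set.range (stoneCechUnit : ℕ → StoneCech ℕ) = ⋃ k, clB {k} := by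
    rw [Set.range_eq_iUnion]
    exact Set.iUnion_congr fun k => (clB_singleton k).symm
  rw [this]
  exact isOpen_iUnion fun k => (isClopen_clB _).2

lemma clB_subset_range_finite {E : Set ℕ}
    (h : clB E ⊆ Set.range (stoneCechUnit : ℕ → StoneCech ℕ)) : E.Finite := by
  have hcp : IsCompact (clB E) := (isClopen_clB E).1.isCompact
  have hcover : clB E ⊆ ⋃ k : ℕ, clB {k} := by
    intro x hx
    obtain ⟨k, rfl⟩ := h hx
    exact Set.mem_iUnion.2 ⟨k, by simp [clB_singleton]⟩
  obtain ⟨t, ht⟩ := hcp.elim_finite_subcover (fun k : ℕ => clB {k})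
    (fun k => (isClopen_clB _).2) hcover
  refine Set.Finite.subset t.finite_toSet fun k hk => ?_
  have : stoneCechUnit k ∈ clB E := subset_closure ⟨k, hk, rfl⟩
  obtain ⟨m, hm, hmem⟩ := Set.mem_iUnion₂.1 (ht this)
  rw [clB_singleton, Set.mem_singleton_iff] at hmem
  exact (stoneCechUnit_injective hmem) ▸ hm

lemma clB_finite {E : Set ℕ} (h : E.Finite) : clB E = stoneCechUnit '' E := by
  unfold clB
  exact closure_eq_iff_isClosed.2 (h.image _).isClosed

/-- Separation of disjoint compact sets in `Ultrafilter ℕ` by a basic clopen set. -/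
lemma ultrafilter_sep {K1 K2 : Set (Ultrafilter ℕ)} (h1 : IsCompact K1) (h2 : IsClosed K2)
    (hd : Disjoint K1 K2) : ∃ B : Set ℕ, K1 ⊆ {v | B ∈ v} ∧ ∀ v ∈ K2, B ∉ v := by
  rcases K1.eq_empty_or_nonempty with rfl | hK1ne
  · exact ⟨∅, by simp, fun v _ hv => v.empty_notMem hv⟩
  have key : ∀ x : K1, ∃ b : Set ℕ, b ∈ x.1 ∧ ∀ w ∈ K2, b ∉ w := by
    rintro ⟨v, hv⟩
    have hvK2 : v ∈ K2ᶜ := fun h => (Set.disjoint_left.1 hd hv) h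
    obtain ⟨S, hS, hvS, hSsub⟩ := ultrafilterBasis_is_basis.exists_subset_of_mem_open hvK2
      h2.isOpen_compl
    obtain ⟨b, rfl⟩ := hS
    exact ⟨b, hvS, fun w hw hbw => (hSsub hbw) hw⟩
  choose b hb1 hb2 using key
  obtain ⟨t, ht⟩ := h1.elim_finite_subcover (fun x : K1 => {w : Ultrafilter ℕ | b x ∈ w})
    (fun x => ultrafilter_isOpen_basic _)
    (fun v hv => Set.mem_iUnion.2 ⟨⟨v, hv⟩, hb1 ⟨v, hv⟩⟩)
  refine ⟨⋃ x ∈ (t : Set K1), b x, ?_, ?_⟩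
  · intro v hv
    obtain ⟨x, hx, hmem⟩ := Set.mem_iUnion₂.1 (ht hv)
    exact Filter.mem_of_superset hmem (Set.subset_biUnion_of_mem hx)
  · intro v hv hmem
    rw [Ultrafilter.finite_biUnion_mem_iff t.finite_toSet] at hmem
    obtain ⟨x, _, hbx⟩ := hmem
    exact hb2 x v hv hbx

/-- Separation of disjoint closed sets in `βℕ` by a basic clopen set. -/
lemma clB_sep {K1 K2 : Set (StoneCech ℕ)} (h1 : IsClosed K1) (h2 : IsClosed K2)
    (hd : Disjoint K1 K2) : ∃ B : Set ℕ, K1 ⊆ clB B ∧ Disjoint (clB B) K2 := by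
  have hr1 : IsCompact (scR '' K1) := (h1.isCompact).image scR_continuous
  have hr2 : IsClosed (scR '' K2) := (h2.isCompact.image scR_continuous).isClosed
  have hrd : Disjoint (scR '' K1) (scR '' K2) := by
    rw [Set.disjoint_left]
    rintro _ ⟨x, hx, rfl⟩ ⟨y, hy, hxy⟩
    have : x = y := by rw [← scQ_scR x, ← scQ_scR y, hxy]
    exact Set.disjoint_left.1 hd hx (this ▸ hy)
  obtain ⟨B, hB1, hB2⟩ := ultrafilter_sep hr1 hr2 hrd
  refine ⟨B, ?_, ?_⟩
  · intro x hx
    rw [mem_clB]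
    exact hB1 ⟨x, hx, rfl⟩
  · rw [Set.disjoint_left]
    intro x hx hx2
    rw [mem_clB] at hx
    exact hB2 (scR x) ⟨x, hx2, rfl⟩ hx

lemma isClosed_omegaSet : IsClosed {p : StoneCech ℕ | p ∉ Set.range (stoneCechUnit : ℕ → StoneCech ℕ)} :=
  isOpen_range_unit.isClosed_compl

instance : CompactSpace OmegaStar :=
  isCompact_iff_compactSpace.mp isClosed_omegaSet.isCompact

/-- main extension lemma -/
lemma exists_extension (A : ℕ → Set OmegaStar) (hclopen : ∀ n, IsClopen (A n))
    (hdisj : Pairwise (Function.onFun Disjoint A))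
    (f : BoundedContinuousFunction (⋃ n, A n : Set OmegaStar) ℝ) :
    ∃ F : StoneCech ℕ → ℝ, Continuous F ∧ (∀ x, |F x| ≤ ‖f‖) ∧
      ∀ (z : OmegaStar) (hz : z ∈ ⋃ n, A n), F z.1 = f ⟨z, hz⟩ := by
  classical
  set β := StoneCech ℕ
  set val : OmegaStar → β := Subtype.val with hval
  have hval_inj : Function.Injective val := Subtype.val_injective
  set C : ℕ → Set β := fun n => val '' A n with hC
  set D : ℕ → Set β := fun n => val '' (A n)ᶜ with hD
  have hCclosed : ∀ n, IsClosed (C n) := by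
    intro n
    exact (((hclopen n).1.isCompact).image continuous_subtype_val).isClosed
  have hDclosed : ∀ n, IsClosed (D n) := by
    intro n
    exact (((isClosed_compl_iff.2 (hclopen n).2).isCompact).image continuous_subtype_val).isClosed
  have hCD : ∀ n, Disjoint (C n) (D n) := by
    intro n
    rw [Set.disjoint_left]
    rintro _ ⟨z, hz, rfl⟩ ⟨w, hw, hwz⟩
    exact hw (hval_inj hwz ▸ hz)
  have hCnr : ∀ n, ∀ x ∈ C n, x ∉ Set.range (stoneCechUnit : ℕ → StoneCech ℕ) := by
    rintro n _ ⟨z, _, rfl⟩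
    exact z.2
  -- step 1 : choose B n
  have step1 : ∀ n, ∃ B : Set ℕ, C n ⊆ clB B ∧ Disjoint (clB B) (D n) :=
    fun n => clB_sep (hCclosed n) (hDclosed n) (hCD n)
  choose B hB1 hB2 using step1
  -- if x ∈ clB (B n) and x not a unit then the corresponding z lies in A n
  have hmemA : ∀ n (x : β) (hx : x ∈ clB (B n))
      (hxr : x ∉ Set.range (stoneCechUnit : ℕ → StoneCech ℕ)), (⟨x, hxr⟩ : OmegaStar) ∈ A n := by
    intro n x hx hxr
    by_contra hna
    exact Set.disjoint_left.1 (hB2 n) hx ⟨⟨x, hxr⟩, hna, rfl⟩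
  -- almost disjointness
  have hfin : ∀ m n, m ≠ n → (B m ∩ B n).Finite := by
    intro m n hmn
    apply clB_subset_range_finite
    rw [clB_inter]
    rintro x ⟨hxm, hxn⟩
    by_contra hxr
    exact Set.disjoint_left.1 (hdisj hmn) (hmemA m x hxm hxr) (hmemA n x hxn hxr)
  -- disjointification
  set B' : ℕ → Set ℕ := fun n => B n \ ⋃ m ∈ Finset.range n, B m with hB'
  have hB'key : ∀ m n, m < n → Disjoint (B' m) (B' n) := by
    intro m n hlt
    rw [Set.disjoint_left]
    rintro k ⟨hk1, -⟩ ⟨-, hk2⟩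
    exact hk2 (Set.mem_biUnion (Finset.mem_range.2 hlt) hk1)
  have hB'disj : Pairwise (Function.onFun Disjoint B') := by
    intro m n hmn
    rcases lt_or_gt_of_ne hmn with h | h
    · exact hB'key m n h
    · exact (hB'key n m h).symm
  have hCB' : ∀ n, C n ⊆ clB (B' n) := by
    intro n x hx
    have h1 : x ∈ clB (B n) := hB1 n hx
    have hsplit : B n ⊆ B' n ∪ (B n \ B' n) := fun k hk => by
      by_cases h : k ∈ B' n
      · exact Or.inl h
      · exact Or.inr ⟨hk, h⟩
    have hdif : (B n \ B' n).Finite := by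
      apply Set.Finite.subset (Set.Finite.biUnion (Finset.range n).finite_toSet
        (fun m hm => hfin n m (by simp only [Finset.coe_range, Set.mem_Iio] at hm; omega)))
      rintro k ⟨hk, hk2⟩
      rw [hB'] at hk2
      simp only [Set.mem_diff, not_and, not_not] at hk2
      obtain ⟨m, hm, hkm⟩ := Set.mem_iUnion₂.1 (hk2 hk)
      exact Set.mem_iUnion₂.2 ⟨m, hm, hk, hkm⟩
    have : x ∈ clB (B' n) ∪ clB (B n \ B' n) := by
      rcases (mem_clB.1 h1) with h
      rw [Set.union_def]
      by_cases hmem : x ∈ clB (B' n)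
      · exact Or.inl hmem
      · right
        rw [mem_clB]
        have : B n \ B' n ∈ scR x := by
          have hBn : B n ∈ scR x := mem_clB.1 h1
          have hnot : B' n ∉ scR x := fun hc => hmem (mem_clB.2 hc)
          have := (Ultrafilter.compl_mem_iff_notMem).2 hnot
          have := Filter.inter_mem hBn this
          exact Filter.mem_of_superset this (fun k ⟨h1', h2'⟩ => ⟨h1', h2'⟩)
        exact this
    rcases this with h | h
    · exact h
    · exfalso
      rw [clB_finite hdif] at h
      obtain ⟨k, -, rfl⟩ := h
      exact hCnr n _ hx ⟨k, rfl⟩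
  -- Tietze extensions on each piece
  set M := ‖f‖ with hMdef
  have hM0 : (0:ℝ) ≤ M := norm_nonneg f
  have hmemU : ∀ n (x : β) (hx : x ∈ C n), (⟨x, hCnr n x hx⟩ : OmegaStar) ∈ ⋃ m, A m :=
    fun n x hx => Set.mem_iUnion.2 ⟨n, hmemA n x (hB1 n hx) _⟩
  set fC : ∀ n, C(↥(C n), ℝ) := fun n =>
    { toFun := fun x => f ⟨⟨x.1, hCnr n x.1 x.2⟩, hmemU n x.1 x.2⟩
      continuous_toFun := f.continuous.comp (by fun_prop) } with hfC
  have step2 : ∀ n, ∃ g : C(β, ℝ), g.restrict (C n) = fC n :=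
    fun n => ContinuousMap.exists_restrict_eq (hCclosed n) (fC n)
  choose h hh using step2
  set h' : ℕ → β → ℝ := fun n x => max (-M) (min (h n x) M) with hh'def
  have hh'cont : ∀ n, Continuous (h' n) :=
    fun n => continuous_const.max ((h n).continuous.min continuous_const)
  have hh'bd : ∀ n x, |h' n x| ≤ M := by
    intro n x
    rw [abs_le]
    exact ⟨le_max_left _ _, max_le (by linarith) (min_le_right _ _)⟩
  have hh'eq : ∀ n (x : β) (hx : x ∈ C n),
      h' n x = f ⟨⟨x, hCnr n x hx⟩, hmemU n x hx⟩ := by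
    intro n x hx
    have h1 : h n x = f ⟨⟨x, hCnr n x hx⟩, hmemU n x hx⟩ := ContinuousMap.congr_fun (hh n) ⟨x, hx⟩
    have h2 : |f ⟨⟨x, hCnr n x hx⟩, hmemU n x hx⟩| ≤ M := f.norm_coe_le_norm _
    rw [abs_le] at h2
    rw [hh'def]
    simp only [h1]
    rw [min_eq_left h2.2, max_eq_right h2.1]
  -- the function on ℕ
  set g : ℕ → ℝ := fun k => if hk : ∃ n, k ∈ B' n then h' hk.choose (stoneCechUnit k) else 0
    with hgdef
  have hgbd : ∀ k, |g k| ≤ M := by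
    intro k
    simp only [hgdef]
    split
    · exact hh'bd _ _
    · simpa using hM0
  set gI : ℕ → ↥(Set.Icc (-M) M) := fun k => ⟨g k, Set.mem_Icc.2 (abs_le.1 (hgbd k))⟩
  set G : β → ↥(Set.Icc (-M) M) := stoneCechExtend (continuous_of_discreteTopology (f := gI))
    with hGdef
  set F : β → ℝ := fun x => (G x : ℝ) with hFdef
  have hFcont : Continuous F := continuous_subtype_val.comp (continuous_stoneCechExtend _)
  have hFbd : ∀ x, |F x| ≤ M := by
    intro x
    have := (G x).2
    rw [Set.mem_Icc] at this
    rw [abs_le]; exact this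
  have hFunit : ∀ k, F (stoneCechUnit k) = g k := by
    intro k
    have : G (stoneCechUnit k) = gI k := congrFun (stoneCechExtend_extends _) k
    rw [hFdef]; simp only [this]; rfl
  -- F agrees with h' n on clB (B' n)
  have key : ∀ n, ∀ x ∈ clB (B' n), F x = h' n x := by
    intro n
    have hsub : stoneCechUnit '' B' n ⊆ {x | F x = h' n x} := by
      rintro _ ⟨k, hk, rfl⟩
      have hex : ∃ m, k ∈ B' m := ⟨n, hk⟩
      have hn' : hex.choose = n := by
        by_contra hne
        exact Set.disjoint_left.1 (hB'disj hne) hex.choose_spec hk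
      rw [Set.mem_setOf_eq, hFunit k]
      simp only [hgdef, dif_pos hex]
      rw [hn']
    exact closure_minimal hsub (isClosed_eq hFcont (hh'cont n))
  refine ⟨F, hFcont, fun x => hFbd x, ?_⟩
  intro z hz
  obtain ⟨n, hn⟩ := Set.mem_iUnion.1 hz
  have hzC : (z : β) ∈ C n := ⟨z, hn, rfl⟩
  have h1 : F z.1 = h' n z.1 := key n _ (hCB' n hzC)
  rw [h1, hh'eq n z.1 hzC]


/-- If `A` is the union of an infinite sequence of pairwise disjoint nonempty clopen
subsets of `ω*`, then restriction is a linear isometric isomorphism from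
`C(closure A)` onto `C_b(A)`; equivalently, `closure A = βA`. -/
theorem restriction_C_closure_isometricIso_Cb
    (A : ℕ → Set OmegaStar) (hclopen : ∀ n, IsClopen (A n)) (hne : ∀ n, (A n).Nonempty)
    (hdisj : Pairwise (Function.onFun Disjoint A)) :
    ∃ T : BoundedContinuousFunction (closure (⋃ n, A n)) ℝ ≃ₗᵢ[ℝ]
        BoundedContinuousFunction (⋃ n, A n : Set OmegaStar) ℝ,
      ∀ (f : BoundedContinuousFunction (closure (⋃ n, A n)) ℝ) (x : (⋃ n, A n : Set OmegaStar)),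
        T f x = f ⟨x.1, subset_closure x.2⟩ := by
  classical
  set S : Set OmegaStar := ⋃ n, A n with hS
  set ι : C(↥S, ↥(closure S)) :=
    ⟨fun x => ⟨x.1, subset_closure x.2⟩, by fun_prop⟩ with hι
  have norm_ge : ∀ f : BoundedContinuousFunction ↥(closure S) ℝ,
      ‖f‖ ≤ ‖f.compContinuous ι‖ := by
    intro f
    rw [BoundedContinuousFunction.norm_le (norm_nonneg _)]
    intro y
    have hy : y ∈ closure (Set.range ι) := by
      rw [closure_subtype]
      have himg : (Subtype.val '' Set.range ι) = S := by
        ext w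
        constructor
        · rintro ⟨_, ⟨x, rfl⟩, rfl⟩; exact x.2
        · intro hw; exact ⟨ι ⟨w, hw⟩, ⟨⟨w, hw⟩, rfl⟩, rfl⟩
      rw [himg]; exact y.2
    have hcl : IsClosed {y : ↥(closure S) | ‖f y‖ ≤ ‖f.compContinuous ι‖} :=
      isClosed_le (by fun_prop) continuous_const
    have hsub : Set.range ι ⊆ {y : ↥(closure S) | ‖f y‖ ≤ ‖f.compContinuous ι‖} := by
      rintro _ ⟨x, rfl⟩
      exact (f.compContinuous ι).norm_coe_le_norm x
    exact closure_minimal hsub hcl hy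
  set R : BoundedContinuousFunction ↥(closure S) ℝ →ₗᵢ[ℝ] BoundedContinuousFunction ↥S ℝ :=
    { toFun := fun f => f.compContinuous ι
      map_add' := fun f g => by ext x; rfl
      map_smul' := fun c f => by ext x; rfl
      norm_map' := fun f => le_antisymm (f.norm_compContinuous_le ι) (norm_ge f) } with hR
  have hsurj : Function.Surjective R := by
    intro hb
    obtain ⟨F, hFc, hFbd, hFeq⟩ := exists_extension A hclopen hdisj hb
    set Fc : BoundedContinuousFunction ↥(closure S) ℝ :=
      BoundedContinuousFunction.ofNormedAddCommGroup (fun y => F y.1.1)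
        (hFc.comp (continuous_subtype_val.comp continuous_subtype_val)) ‖hb‖
        (fun y => by rw [Real.norm_eq_abs]; exact hFbd y.1.1) with hFcdef
    refine ⟨Fc, ?_⟩
    ext x
    show Fc (ι x) = hb x
    have : Fc (ι x) = F x.1.1 := rfl
    rw [this, hFeq x.1 x.2]
  refine ⟨LinearIsometryEquiv.ofSurjective R hsurj, ?_⟩
  intro f x
  rw [LinearIsometryEquiv.coe_ofSurjective]
  rfl

end
end

section
/- Let X be a real Banach space and suppose X is isomorphic (via a continuous linear equivalence) to ℓ∞(X) ⊕ Z for some real Banach space Z, where ℓ∞(X) denotes the Banach space of bounded sequences in X with the supremum norm (i.e., ℓ∞(X) is isomorphic to a complemented subspace of X). Then ℓ∞(X) is isomorphic to X. -/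
open Filter Topology
open scoped ENNReal

set_option synthInstance.maxHeartbeats 400000
set_option maxHeartbeats 1000000

noncomputable section

universe u

section Aux

variable (X : Type u) [NormedAddCommGroup X] [NormedSpace ℝ X]

/-- Pullback along a map of index types, as a continuous linear map on `ℓ∞`. -/
def lpInftyPull {α β : Type} (g : β → α) :
    lp (fun _ : α => X) ∞ →L[ℝ] lp (fun _ : β => X) ∞ :=
  LinearMap.mkContinuous
    { toFun := fun f =>
        ⟨fun b => f (g b), memℓp_infty ⟨‖f‖, by
          rintro r ⟨b, rfl⟩
          exact lp.norm_apply_le_norm ENNReal.top_ne_zero f (g b)⟩⟩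
      map_add' := fun f h => by
        apply lp.ext
        funext b
        simp [lp.coeFn_add, Pi.add_apply]
        rfl
      map_smul' := fun c f => by
        apply lp.ext
        funext b
        simp [lp.coeFn_smul] }
    1 (fun f => by
      rw [one_mul]
      exact lp.norm_le_of_forall_le (norm_nonneg f) fun b =>
        lp.norm_apply_le_norm ENNReal.top_ne_zero f (g b))

@[simp] theorem lpInftyPull_apply {α β : Type} (g : β → α)
    (f : lp (fun _ : α => X) ∞) (b : β) : (lpInftyPull X g f : ∀ _ : β, X) b = f (g b) := rfl

/-- Combining two `ℓ∞` sequences over a sum index type. -/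
def lpInftyElim {α β : Type} :
    (lp (fun _ : α => X) ∞) × (lp (fun _ : β => X) ∞) →L[ℝ] lp (fun _ : α ⊕ β => X) ∞ :=
  LinearMap.mkContinuous
    { toFun := fun p =>
        ⟨Sum.elim (p.1 : ∀ _ : α, X) (p.2 : ∀ _ : β, X), memℓp_infty ⟨‖p‖, by
          rintro r ⟨x, rfl⟩
          cases x with
          | inl a =>
            exact le_trans (lp.norm_apply_le_norm ENNReal.top_ne_zero p.1 a)
              (le_trans (le_max_left _ _) (le_of_eq (Prod.norm_def p).symm))
          | inr b =>
            exact le_trans (lp.norm_apply_le_norm ENNReal.top_ne_zero p.2 b)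
              (le_trans (le_max_right _ _) (le_of_eq (Prod.norm_def p).symm))⟩⟩
      map_add' := fun p q => by
        apply lp.ext
        funext x
        cases x <;> simp [lp.coeFn_add, Pi.add_apply] <;> rfl
      map_smul' := fun c p => by
        apply lp.ext
        funext x
        cases x <;> simp [lp.coeFn_smul] }
    1 (fun p => by
      rw [one_mul]
      refine lp.norm_le_of_forall_le (norm_nonneg p) fun x => ?_
      cases x with
      | inl a =>
        exact le_trans (lp.norm_apply_le_norm ENNReal.top_ne_zero p.1 a)
          (le_trans (le_max_left _ _) (le_of_eq (Prod.norm_def p).symm))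
      | inr b =>
        exact le_trans (lp.norm_apply_le_norm ENNReal.top_ne_zero p.2 b)
          (le_trans (le_max_right _ _) (le_of_eq (Prod.norm_def p).symm)))

/-- Reindexing an `ℓ∞` space along an equivalence of index types. -/
def lpInftyReindex {α β : Type} (e : α ≃ β) :
    lp (fun _ : α => X) ∞ ≃L[ℝ] lp (fun _ : β => X) ∞ :=
  ContinuousLinearEquiv.equivOfInverse (lpInftyPull X e.symm) (lpInftyPull X e)
    (fun f => by
      apply lp.ext
      funext a
      simp)
    (fun f => by
      apply lp.ext
      funext b
      simp)

/-- Splitting an `ℓ∞` space over a sum index type as a product. -/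
def lpInftySumSplit {α β : Type} :
    lp (fun _ : α ⊕ β => X) ∞ ≃L[ℝ] (lp (fun _ : α => X) ∞) × (lp (fun _ : β => X) ∞) :=
  ContinuousLinearEquiv.equivOfInverse
    ((lpInftyPull X (Sum.inl : α → α ⊕ β)).prod (lpInftyPull X (Sum.inr : β → α ⊕ β)))
    (lpInftyElim X)
    (fun f => by
      apply lp.ext
      funext x
      cases x <;> rfl)
    (fun p => by
      refine Prod.ext ?_ ?_ <;> (apply lp.ext; funext x; rfl))

/-- `ℓ∞` over a one-point index type is just `X`. -/
def lpInftyPUnit : lp (fun _ : PUnit.{1} => X) ∞ ≃L[ℝ] X :=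
  ContinuousLinearEquiv.equivOfInverse
    (LinearMap.mkContinuous
      { toFun := fun f => f PUnit.unit
        map_add' := fun f g => by simp [lp.coeFn_add]
        map_smul' := fun c f => by simp [lp.coeFn_smul] }
      1 (fun f => by
        rw [one_mul]
        exact lp.norm_apply_le_norm ENNReal.top_ne_zero f PUnit.unit))
    (LinearMap.mkContinuous
      { toFun := fun x =>
          ⟨fun _ => x, memℓp_infty ((Set.finite_range _).bddAbove)⟩
        map_add' := fun x y => by
          apply lp.ext
          funext u
          simp [lp.coeFn_add, Pi.add_apply]
          rfl
        map_smul' := fun c x => by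
          apply lp.ext
          funext u
          simp [lp.coeFn_smul] }
      1 (fun x => by
        rw [one_mul]
        exact lp.norm_le_of_forall_le (norm_nonneg x) fun _ => le_rfl))
    (fun f => by
      apply lp.ext
      funext u
      cases u
      rfl)
    (fun x => rfl)

end Aux

/-- Associativity of products as a continuous linear equivalence. -/
def cleProdAssoc (A B C : Type u) [NormedAddCommGroup A] [NormedSpace ℝ A]
    [NormedAddCommGroup B] [NormedSpace ℝ B] [NormedAddCommGroup C] [NormedSpace ℝ C] :
    ((A × B) × C) ≃L[ℝ] (A × (B × C)) :=
  { LinearEquiv.prodAssoc ℝ A B C with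
    continuous_toFun := by
      exact (continuous_fst.comp continuous_fst).prodMk
        ((continuous_snd.comp continuous_fst).prodMk continuous_snd)
    continuous_invFun := by
      exact (continuous_fst.prodMk (continuous_fst.comp continuous_snd)).prodMk
        (continuous_snd.comp continuous_snd) }

/-- Pełczyński's decomposition method: if a Banach space `X` is isomorphic to
`ℓ∞(X) ⊕ Z` for some Banach space `Z` (i.e. `ℓ∞(X)` is isomorphic to a complemented
subspace of `X`), then `ℓ∞(X)` is isomorphic to `X`. -/
theorem pelczynski_decomposition_linf
    (X : Type u) [NormedAddCommGroup X] [NormedSpace ℝ X] [CompleteSpace X]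
    (Z : Type u) [NormedAddCommGroup Z] [NormedSpace ℝ Z] [CompleteSpace Z]
    (h : Nonempty (X ≃L[ℝ] ((lp (fun _ : ℕ => X) ∞) × Z))) :
    Nonempty ((lp (fun _ : ℕ => X) ∞) ≃L[ℝ] X) := by
  obtain ⟨e⟩ := h
  set L := lp (fun _ : ℕ => X) ∞
  -- split : L ≃ L × L
  have split : L ≃L[ℝ] L × L :=
    (lpInftyReindex X Equiv.natSumNatEquivNat.symm).trans (lpInftySumSplit X)
  -- headTail : L ≃ L × X
  have headTail : L ≃L[ℝ] L × X :=
    ((lpInftyReindex X Equiv.natEquivNatSumPUnit).trans (lpInftySumSplit X)).trans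
      ((ContinuousLinearEquiv.refl ℝ L).prodCongr (lpInftyPUnit X))
  -- X ≃ L × Z ≃ (L × L) × Z ≃ L × (L × Z) ≃ L × X ≃ L
  have e2 : (L × Z) ≃L[ℝ] ((L × L) × Z) := split.prodCongr (ContinuousLinearEquiv.refl ℝ Z)
  have e3 : ((L × L) × Z) ≃L[ℝ] (L × (L × Z)) := cleProdAssoc L L Z
  have e4 : (L × (L × Z)) ≃L[ℝ] (L × X) := (ContinuousLinearEquiv.refl ℝ L).prodCongr e.symm
  exact ⟨((e.trans e2).trans (e3.trans (e4.trans headTail.symm))).symm⟩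

end
end

section
/- Let X be a real Banach space such that X is isomorphic (via a continuous linear equivalence) to ℓ∞(X), the space of bounded sequences in X with supremum norm. Let P : X → X be a continuous linear projection with range W, and suppose W contains a closed subspace V such that V is the range of a continuous linear projection Q : X → X and V is isomorphic to X. Then W is isomorphic to X. -/
open Filter Topology
open scoped ENNReal

set_option synthInstance.maxHeartbeats 400000
set_option maxHeartbeats 1000000

noncomputable section

universe u

namespace Pel

variable {ι κ : Type*} {Z Z' : Type*}
  [NormedAddCommGroup Z] [NormedSpace ℝ Z] [NormedAddCommGroup Z'] [NormedSpace ℝ Z']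

/-- Constructor for continuous linear maps between `ℓ∞` sums. -/
def lpMap (Φ : (∀ _ : ι, Z) →ₗ[ℝ] ∀ _ : κ, Z') (C : ℝ) (hC : 0 ≤ C)
    (h : ∀ (f : lp (fun _ : ι => Z) ∞) (j : κ), ‖Φ (f : ∀ _ : ι, Z) j‖ ≤ C * ‖f‖) :
    lp (fun _ : ι => Z) ∞ →L[ℝ] lp (fun _ : κ => Z') ∞ :=
  LinearMap.mkContinuous
    { toFun := fun f => ⟨Φ f, memℓp_infty ⟨C * ‖f‖, by rintro x ⟨j, rfl⟩; exact h f j⟩⟩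
      map_add' := fun f g => lp.ext (by simp only [lp.coeFn_add, map_add])
      map_smul' := fun c f => lp.ext (by
        simp only [lp.coeFn_smul, map_smul, RingHom.id_apply]) }
    C
    (fun f => lp.norm_le_of_forall_le (mul_nonneg hC (norm_nonneg f)) (fun j => h f j))

@[simp] theorem lpMap_apply (Φ : (∀ _ : ι, Z) →ₗ[ℝ] ∀ _ : κ, Z') (C hC h)
    (f : lp (fun _ : ι => Z) ∞) (j : κ) : lpMap Φ C hC h f j = Φ (f : ∀ _ : ι, Z) j := rfl

theorem norm_apply {E : ι → Type*} [∀ i, NormedAddCommGroup (E i)]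
    (f : lp E ∞) (i : ι) : ‖f i‖ ≤ ‖f‖ :=
  lp.norm_apply_le_norm ENNReal.top_ne_zero f i

/-- `ℓ∞` congruence along an index bijection and a coordinatewise isomorphism. -/
def lpCongr (g : ι ≃ κ) (e : Z ≃L[ℝ] Z') :
    lp (fun _ : ι => Z) ∞ ≃L[ℝ] lp (fun _ : κ => Z') ∞ :=
  ContinuousLinearEquiv.equivOfInverse
    (lpMap
      { toFun := fun f k => e (f (g.symm k))
        map_add' := fun f g' => by funext k; simp
        map_smul' := fun c f => by funext k; simp }
      ‖(e : Z →L[ℝ] Z')‖ (norm_nonneg _)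
      (fun f k => le_trans ((e : Z →L[ℝ] Z').le_opNorm _)
        (mul_le_mul_of_nonneg_left (norm_apply f _) (norm_nonneg _))))
    (lpMap
      { toFun := fun f i => e.symm (f (g i))
        map_add' := fun f g' => by funext k; simp
        map_smul' := fun c f => by funext k; simp }
      ‖(e.symm : Z' →L[ℝ] Z)‖ (norm_nonneg _)
      (fun f i => le_trans ((e.symm : Z' →L[ℝ] Z).le_opNorm _)
        (mul_le_mul_of_nonneg_left (norm_apply f _) (norm_nonneg _))))
    (fun f => lp.ext (funext fun i => by simp [lpMap]))
    (fun f => lp.ext (funext fun k => by simp [lpMap]))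


set_option maxHeartbeats 1000000

def lpSumSplit : lp (fun _ : ι ⊕ κ => Z) ∞ →L[ℝ] (lp (fun _ : ι => Z) ∞) × lp (fun _ : κ => Z) ∞ :=
  (lpMap
    { toFun := fun f i => f (Sum.inl i)
      map_add' := fun f g => by funext i; simp
      map_smul' := fun c f => by funext i; simp }
    1 zero_le_one (fun f i => by simpa using norm_apply f (Sum.inl i))).prod
  (lpMap
    { toFun := fun f k => f (Sum.inr k)
      map_add' := fun f g => by funext i; simp
      map_smul' := fun c f => by funext i; simp }
    1 zero_le_one (fun f k => by simpa using norm_apply f (Sum.inr k)))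

@[simp] theorem lpSumSplit_fst (f : lp (fun _ : ι ⊕ κ => Z) ∞) (i : ι) :
    (lpSumSplit f).1 i = f (Sum.inl i) := rfl
@[simp] theorem lpSumSplit_snd (f : lp (fun _ : ι ⊕ κ => Z) ∞) (k : κ) :
    (lpSumSplit f).2 k = f (Sum.inr k) := rfl

def lpSumGlue : (lp (fun _ : ι => Z) ∞) × lp (fun _ : κ => Z) ∞ →L[ℝ] lp (fun _ : ι ⊕ κ => Z) ∞ :=
  LinearMap.mkContinuous
    { toFun := fun fg =>
        (⟨Sum.elim ⇑fg.1 ⇑fg.2, memℓp_infty ⟨‖fg‖, by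
          rintro x ⟨j, rfl⟩
          cases j with
          | inl i => exact le_trans (norm_apply fg.1 i) (norm_fst_le fg)
          | inr k => exact le_trans (norm_apply fg.2 k) (norm_snd_le fg)⟩⟩ :
          lp (fun _ : ι ⊕ κ => Z) ∞)
      map_add' := fun a b => lp.ext (funext fun x => by
        cases x <;> rfl)
      map_smul' := fun c a => lp.ext (funext fun x => by
        cases x <;> simp [lp.coeFn_smul]) }
    1
    (fun fg => lp.norm_le_of_forall_le (by positivity) (fun x => by
      rw [one_mul]
      cases x with
      | inl i => exact le_trans (norm_apply fg.1 i) (norm_fst_le fg)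
      | inr k => exact le_trans (norm_apply fg.2 k) (norm_snd_le fg)))

@[simp] theorem lpSumGlue_apply (fg : (lp (fun _ : ι => Z) ∞) × lp (fun _ : κ => Z) ∞)
    (x : ι ⊕ κ) : lpSumGlue fg x = Sum.elim ⇑fg.1 ⇑fg.2 x := rfl

/-- `ℓ∞(ι ⊕ κ; Z) ≃ ℓ∞(ι; Z) × ℓ∞(κ; Z)`. -/
def lpSumEquiv :
    lp (fun _ : ι ⊕ κ => Z) ∞ ≃L[ℝ] (lp (fun _ : ι => Z) ∞) × lp (fun _ : κ => Z) ∞ :=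
  ContinuousLinearEquiv.equivOfInverse lpSumSplit lpSumGlue
    (fun f => lp.ext (funext fun x => by cases x <;> simp))
    (fun fg => Prod.ext (lp.ext (funext fun i => by simp))
      (lp.ext (funext fun k => by simp)))

def lpProdSplit :
    lp (fun _ : ι => Z × Z') ∞ →L[ℝ] (lp (fun _ : ι => Z) ∞) × lp (fun _ : ι => Z') ∞ :=
  (lpMap
    { toFun := fun f i => (f i).1
      map_add' := fun f g => by funext i; simp
      map_smul' := fun c f => by funext i; simp }
    1 zero_le_one (fun f i => by
      simpa using le_trans (norm_fst_le (f i)) (norm_apply f i))).prod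
  (lpMap
    { toFun := fun f i => (f i).2
      map_add' := fun f g => by funext i; simp
      map_smul' := fun c f => by funext i; simp }
    1 zero_le_one (fun f i => by
      simpa using le_trans (norm_snd_le (f i)) (norm_apply f i)))

@[simp] theorem lpProdSplit_fst (f : lp (fun _ : ι => Z × Z') ∞) (i : ι) :
    (lpProdSplit f).1 i = (f i).1 := rfl
@[simp] theorem lpProdSplit_snd (f : lp (fun _ : ι => Z × Z') ∞) (i : ι) :
    (lpProdSplit f).2 i = (f i).2 := rfl

def lpProdGlue :
    (lp (fun _ : ι => Z) ∞) × lp (fun _ : ι => Z') ∞ →L[ℝ] lp (fun _ : ι => Z × Z') ∞ :=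
  LinearMap.mkContinuous
    { toFun := fun fg =>
        (⟨fun i => (fg.1 i, fg.2 i), memℓp_infty ⟨‖fg‖, by
          rintro x ⟨i, rfl⟩
          exact max_le (le_trans (norm_apply fg.1 i) (norm_fst_le fg))
            (le_trans (norm_apply fg.2 i) (norm_snd_le fg))⟩⟩ :
          lp (fun _ : ι => Z × Z') ∞)
      map_add' := fun a b => lp.ext (funext fun i => by
        rfl)
      map_smul' := fun c a => lp.ext (funext fun i => by
        simp [lp.coeFn_smul, Prod.ext_iff]) }
    1
    (fun fg => lp.norm_le_of_forall_le (by positivity) (fun i => by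
      rw [one_mul]
      exact max_le (le_trans (norm_apply fg.1 i) (norm_fst_le fg))
        (le_trans (norm_apply fg.2 i) (norm_snd_le fg))))

@[simp] theorem lpProdGlue_apply (fg : (lp (fun _ : ι => Z) ∞) × lp (fun _ : ι => Z') ∞)
    (i : ι) : lpProdGlue fg i = (fg.1 i, fg.2 i) := rfl

/-- `ℓ∞(ι; Z × Z') ≃ ℓ∞(ι; Z) × ℓ∞(ι; Z')`. -/
def lpProdEquiv :
    lp (fun _ : ι => Z × Z') ∞ ≃L[ℝ] (lp (fun _ : ι => Z) ∞) × lp (fun _ : ι => Z') ∞ :=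
  ContinuousLinearEquiv.equivOfInverse lpProdSplit lpProdGlue
    (fun f => lp.ext (funext fun i => by simp))
    (fun fg => Prod.ext (lp.ext (funext fun i => by simp))
      (lp.ext (funext fun i => by simp)))

/-- `ℓ∞(PUnit; Z) ≃ Z`. -/
def lpPUnitEquiv : lp (fun _ : PUnit.{1} => Z) ∞ ≃L[ℝ] Z :=
  ContinuousLinearEquiv.equivOfInverse
    (LinearMap.mkContinuous
      { toFun := fun f => f PUnit.unit
        map_add' := fun f g => by simp [lp.coeFn_add]
        map_smul' := fun c f => by simp [lp.coeFn_smul] }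
      1 (fun f => by rw [one_mul]; exact norm_apply f _))
    (LinearMap.mkContinuous
      { toFun := fun z =>
          (⟨fun _ => z, memℓp_infty ⟨‖z‖, by rintro x ⟨j, rfl⟩; exact le_rfl⟩⟩ :
            lp (fun _ : PUnit.{1} => Z) ∞)
        map_add' := fun a b => lp.ext (funext fun i => rfl)
        map_smul' := fun c a => lp.ext (funext fun i => rfl) }
      1 (fun z => lp.norm_le_of_forall_le (by positivity) (fun i => by
        rw [one_mul]; exact le_rfl)))
    (fun f => lp.ext (funext fun i => by cases i; rfl))
    (fun z => rfl)


/-- Shift: `ℓ∞(ℕ; Z) ≃ Z × ℓ∞(ℕ; Z)`. -/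
def lpShift : lp (fun _ : ℕ => Z) ∞ ≃L[ℝ] Z × lp (fun _ : ℕ => Z) ∞ :=
  (lpCongr Equiv.natEquivNatSumPUnit (ContinuousLinearEquiv.refl ℝ Z)).trans <|
    lpSumEquiv.trans <|
      ((ContinuousLinearEquiv.refl ℝ _).prodCongr lpPUnitEquiv).trans <|
        ContinuousLinearEquiv.prodComm ℝ _ _

/-- Doubling: `ℓ∞(ℕ; Z) ≃ ℓ∞(ℕ; Z) × ℓ∞(ℕ; Z)`. -/
def lpDouble : lp (fun _ : ℕ => Z) ∞ ≃L[ℝ] lp (fun _ : ℕ => Z) ∞ × lp (fun _ : ℕ => Z) ∞ :=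
  (lpCongr Equiv.natSumNatEquivNat.symm (ContinuousLinearEquiv.refl ℝ Z)).trans lpSumEquiv

section Proj

variable {X : Type*} [NormedAddCommGroup X] [NormedSpace ℝ X] [CompleteSpace X]

theorem apply_of_mem_range {R : X →L[ℝ] X} (hR : R.comp R = R) {x : X}
    (hx : x ∈ LinearMap.range (R : X →ₗ[ℝ] X)) : R x = x := by
  obtain ⟨y, rfl⟩ := hx
  exact DFunLike.congr_fun hR y

theorem isClosed_range_of_idem (R : X →L[ℝ] X) (hR : R.comp R = R) :
    IsClosed ((LinearMap.range (R : X →ₗ[ℝ] X) : Submodule ℝ X) : Set X) := by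
  have h : (LinearMap.range (R : X →ₗ[ℝ] X) : Submodule ℝ X)
      = LinearMap.ker ((ContinuousLinearMap.id ℝ X - R : X →L[ℝ] X) : X →ₗ[ℝ] X) := by
    ext x
    simp only [LinearMap.mem_range, LinearMap.mem_ker, ContinuousLinearMap.coe_sub',
      ContinuousLinearMap.coe_coe, Pi.sub_apply, ContinuousLinearMap.coe_id', id_eq, sub_eq_zero]
    constructor
    · rintro ⟨y, rfl⟩
      exact (DFunLike.congr_fun hR y).symm
    · intro h
      exact ⟨x, h.symm⟩
  rw [h]
  exact ContinuousLinearMap.isClosed_ker _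

theorem isCompl_range_ker_of_idem (R : X →L[ℝ] X) (hR : R.comp R = R) :
    IsCompl (LinearMap.range (R : X →ₗ[ℝ] X)) (LinearMap.ker (R : X →ₗ[ℝ] X)) := by
  have h := LinearMap.isCompl_of_proj
    (f := (R : X →ₗ[ℝ] X).codRestrict (LinearMap.range (R : X →ₗ[ℝ] X))
      (fun c => LinearMap.mem_range_self _ c))
    (fun x => Subtype.ext (apply_of_mem_range hR x.2))
  rwa [LinearMap.ker_codRestrict] at h

/-- A continuous idempotent yields a decomposition `X ≃ range × ker`. -/
def idemEquiv (R : X →L[ℝ] X) (hR : R.comp R = R) :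
    X ≃L[ℝ] ↥(LinearMap.range (R : X →ₗ[ℝ] X)) × ↥(LinearMap.ker (R : X →ₗ[ℝ] X)) :=
  (Submodule.prodEquivOfClosedCompl _ _ (isCompl_range_ker_of_idem R hR)
    (isClosed_range_of_idem R hR) (ContinuousLinearMap.isClosed_ker R)).symm

end Proj
section Decomp

variable {X : Type*} [NormedAddCommGroup X] [NormedSpace ℝ X] [CompleteSpace X]

theorem decomp (P Q : X →L[ℝ] X) (hP : P.comp P = P) (hQ : Q.comp Q = Q)
    (hVW : LinearMap.range (Q : X →ₗ[ℝ] X) ≤ LinearMap.range (P : X →ₗ[ℝ] X)) :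
    Nonempty (↥(LinearMap.range (P : X →ₗ[ℝ] X)) ≃L[ℝ]
      ↥(LinearMap.range (Q : X →ₗ[ℝ] X)) × ↥(LinearMap.range ((P - Q.comp P : X →L[ℝ] X) : X →ₗ[ℝ] X))) := by
  set A := P - Q.comp P with hA
  have hPP : ∀ x, P (P x) = P x := fun x => DFunLike.congr_fun hP x
  have hQQ : ∀ x, Q (Q x) = Q x := fun x => DFunLike.congr_fun hQ x
  have hPfix : ∀ x ∈ LinearMap.range (P : X →ₗ[ℝ] X), P x = x := fun x hx => apply_of_mem_range hP hx
  have hQfix : ∀ x ∈ LinearMap.range (Q : X →ₗ[ℝ] X), Q x = x := fun x hx => apply_of_mem_range hQ hx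
  have hPQ : ∀ x, P (Q x) = Q x := fun x => hPfix _ (hVW (LinearMap.mem_range_self _ x))
  have hAx : ∀ x, A x = P x - Q (P x) := fun x => rfl
  have hUW : LinearMap.range (A : X →ₗ[ℝ] X) ≤ LinearMap.range (P : X →ₗ[ℝ] X) := by
    rintro _ ⟨x, rfl⟩
    refine ⟨x - Q (P x), ?_⟩
    simp only [ContinuousLinearMap.coe_coe]
    rw [map_sub, hPQ, hAx]
  have hQA : ∀ x, Q (A x) = 0 := fun x => by
    rw [hAx, map_sub, hQQ, sub_self]
  have hAQ : ∀ x, A (Q x) = 0 := fun x => by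
    rw [hAx, hPQ, hQQ, sub_self]
  have hPA : ∀ x, P (A x) = A x := fun x => by
    rw [hAx, map_sub, hPP, hPQ]
  have hAA : ∀ x, A (A x) = A x := fun x => by
    rw [hAx (A x), hPA, hQA, sub_zero]
  let T : ↥(LinearMap.range (P : X →ₗ[ℝ] X)) →L[ℝ] ↥(LinearMap.range (Q : X →ₗ[ℝ] X)) × ↥(LinearMap.range (A : X →ₗ[ℝ] X)) :=
    ((Q.comp (LinearMap.range (P : X →ₗ[ℝ] X)).subtypeL).codRestrict (LinearMap.range (Q : X →ₗ[ℝ] X))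
        (fun w => LinearMap.mem_range_self _ _)).prod
      ((A.comp (LinearMap.range (P : X →ₗ[ℝ] X)).subtypeL).codRestrict (LinearMap.range (A : X →ₗ[ℝ] X))
        (fun w => LinearMap.mem_range_self _ _))
  let S : ↥(LinearMap.range (Q : X →ₗ[ℝ] X)) × ↥(LinearMap.range (A : X →ₗ[ℝ] X)) →L[ℝ] ↥(LinearMap.range (P : X →ₗ[ℝ] X)) :=
    (((LinearMap.range (Q : X →ₗ[ℝ] X)).subtypeL.comp (ContinuousLinearMap.fst ℝ _ _)) +
        ((LinearMap.range (A : X →ₗ[ℝ] X)).subtypeL.comp (ContinuousLinearMap.snd ℝ _ _))).codRestrict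
      (LinearMap.range (P : X →ₗ[ℝ] X))
      (fun vu => Submodule.add_mem _ (hVW vu.1.2) (hUW vu.2.2))
  refine ⟨ContinuousLinearEquiv.equivOfInverse T S ?_ ?_⟩
  · intro w
    exact Subtype.ext (show Q ↑w + A ↑w = ↑w by rw [hAx, hPfix _ w.2]; abel)
  · intro vu
    refine Prod.ext
      (Subtype.ext (show Q (↑vu.1 + ↑vu.2) = ↑vu.1 from ?_))
      (Subtype.ext (show A (↑vu.1 + ↑vu.2) = ↑vu.2 from ?_))
    · obtain ⟨x, hx⟩ := vu.2.2
      rw [map_add, hQfix _ vu.1.2, ← hx, ContinuousLinearMap.coe_coe, hQA, add_zero]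
    · obtain ⟨x, hx⟩ := vu.2.2
      obtain ⟨y, hy⟩ := vu.1.2
      rw [map_add, ← hx, ← hy]; simp only [ContinuousLinearMap.coe_coe]; rw [hAQ, hAA, zero_add]

end Decomp

end Pel


/-- Pełczyński's argument for primariness: if `X ≃ ℓ∞(X)`, `P` is a continuous linear
projection on `X` with range `W`, and `W` contains the range `V` of a continuous linear
projection `Q` with `V` isomorphic to `X`, then `W` is isomorphic to `X`. -/
theorem complemented_subspace_isomorphic_of_contains_copy
    (X : Type u) [NormedAddCommGroup X] [NormedSpace ℝ X] [CompleteSpace X]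
    (hX : Nonempty (X ≃L[ℝ] (lp (fun _ : ℕ => X) ∞)))
    (P : X →L[ℝ] X) (hP : P.comp P = P)
    (Q : X →L[ℝ] X) (hQ : Q.comp Q = Q)
    (hVW : LinearMap.range (Q : X →ₗ[ℝ] X) ≤ LinearMap.range (P : X →ₗ[ℝ] X))
    (hV : Nonempty (↥(LinearMap.range (Q : X →ₗ[ℝ] X)) ≃L[ℝ] X)) :
    Nonempty (↥(LinearMap.range (P : X →ₗ[ℝ] X)) ≃L[ℝ] X) := by
  obtain ⟨eXL⟩ := hX
  obtain ⟨eV⟩ := hV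
  obtain ⟨eWVU⟩ := Pel.decomp P Q hP hQ hVW
  -- `X ≃ W × Y` where `W = range P`, `Y = ker P`
  have e1 : X ≃L[ℝ] ↥(LinearMap.range (P : X →ₗ[ℝ] X)) × ↥(LinearMap.ker (P : X →ₗ[ℝ] X)) := Pel.idemEquiv P hP
  -- `X ≃ X × X`
  have xX2 : X ≃L[ℝ] X × X := eXL.trans (Pel.lpDouble.trans (eXL.symm.prodCongr eXL.symm))
  -- `ℓ∞(X) ≃ W × ℓ∞(X)`
  have cW : lp (fun _ : ℕ => X) ∞ ≃L[ℝ] ↥(LinearMap.range (P : X →ₗ[ℝ] X)) × lp (fun _ : ℕ => X) ∞ :=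
    (Pel.lpCongr (Equiv.refl ℕ) e1).trans <|
      Pel.lpProdEquiv.trans <|
        (Pel.lpShift.prodCongr (ContinuousLinearEquiv.refl ℝ _)).trans <|
          (LinearIsometryEquiv.prodAssoc ℝ ↥(LinearMap.range (P : X →ₗ[ℝ] X)) _ _).toContinuousLinearEquiv.trans <|
            (ContinuousLinearEquiv.refl ℝ ↥(LinearMap.range (P : X →ₗ[ℝ] X))).prodCongr <|
              Pel.lpProdEquiv.symm.trans (Pel.lpCongr (Equiv.refl ℕ) e1.symm)
  -- `X ≃ W × X`
  have xwx : X ≃L[ℝ] ↥(LinearMap.range (P : X →ₗ[ℝ] X)) × X :=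
    eXL.trans (cW.trans ((ContinuousLinearEquiv.refl ℝ _).prodCongr eXL.symm))
  -- `W ≃ X × U`
  have eWXU : ↥(LinearMap.range (P : X →ₗ[ℝ] X)) ≃L[ℝ] X × ↥(LinearMap.range ((P - Q.comp P : X →L[ℝ] X) : X →ₗ[ℝ] X)) :=
    eWVU.trans (eV.prodCongr (ContinuousLinearEquiv.refl ℝ _))
  -- `W ≃ W × X`
  have wWX : ↥(LinearMap.range (P : X →ₗ[ℝ] X)) ≃L[ℝ] ↥(LinearMap.range (P : X →ₗ[ℝ] X)) × X :=
    eWXU.trans <|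
      (xX2.prodCongr (ContinuousLinearEquiv.refl ℝ _)).trans <|
        (LinearIsometryEquiv.prodAssoc ℝ X X _).toContinuousLinearEquiv.trans <|
          (((ContinuousLinearEquiv.refl ℝ X).prodCongr eWXU.symm).trans
            (ContinuousLinearEquiv.prodComm ℝ X _))
  exact ⟨wWX.trans xwx.symm⟩

end
end
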